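/- arXiv:0706.2721 — 4 statements merged into one kernel-verified Lean document; each statement's English description precedes it below -/
import Mathlib

section
/- Let H be a Hopf algebra with antipode S, and let {h_i} be a k-basis of H. Then {Φ⁻¹(h_i ⊗ 1)} = {h_i ⊗ 1} generates H ⊗ H as a right H-module under the action F·f = F·Δ(f), and in fact H ⊗ H is a free right H-module with basis {h_i ⊗ 1}. -/
/-!
Write `Φ(a ⊗ b) = (a ⊗ 1) Δ(b)`, so that `(hᵢ ⊗ 1) · f = Φ(hᵢ ⊗ f)`. Since `{hᵢ}` is a basis,
`(fᵢ) ↦ Σ hᵢ ⊗ fᵢ` is a linear bijection `H^(ι) ≃ H ⊗ H`, so it suffices that `Φ` is bijective.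
Its inverse is `Ψ(a ⊗ b) = a S(b₁) ⊗ b₂`: both maps are left multiplication by `a ⊗ 1` on the
image of `1 ⊗ b`, so `Φ ∘ Ψ` and `Ψ ∘ Φ` are determined by `S(b₁) b₂ ⊗ b₃` and `b₁ S(b₂) ⊗ b₃`,
which equal `1 ⊗ b` by coassociativity and the antipode axioms.
-/

open TensorProduct

/-- The right action of `H` on `H ⊗ H`: `F · f = F * Δ(f)`, using the algebra
structure of `H ⊗ H`. -/
noncomputable def rAct (k H : Type*) [Field k] [Ring H] [HopfAlgebra k H]
    (F : H ⊗[k] H) (f : H) : H ⊗[k] H :=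
  F * Coalgebra.comul f

open Coalgebra HopfAlgebra

namespace TensorProduct

variable {R A : Type*} [CommSemiring R] [Semiring A] [Algebra R A]

noncomputable def leftExtend (g : A →ₗ[R] A ⊗[R] A) : A ⊗[R] A →ₗ[R] A ⊗[R] A :=
  (LinearMap.mul' R A).rTensor A ∘ₗ (TensorProduct.assoc R A A A).symm.toLinearMap ∘ₗ
    g.lTensor A

theorem leftExtend_tmul (g : A →ₗ[R] A ⊗[R] A) (a b : A) :
    leftExtend g (a ⊗ₜ b) = (a ⊗ₜ 1) * g b := by
  simp only [leftExtend, LinearMap.coe_comp, LinearEquiv.coe_coe, Function.comp_apply,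
    LinearMap.lTensor_tmul]
  induction g b using TensorProduct.induction_on with
  | zero => simp
  | tmul x y => simp
  | add x y hx hy => simp_all [tmul_add, mul_add]

theorem leftExtend_tmul_one_mul (g : A →ₗ[R] A ⊗[R] A) (a : A) (x : A ⊗[R] A) :
    leftExtend g ((a ⊗ₜ 1) * x) = (a ⊗ₜ 1) * leftExtend g x := by
  induction x using TensorProduct.induction_on with
  | zero => simp
  | tmul x y => rw [Algebra.TensorProduct.tmul_mul_tmul, one_mul, leftExtend_tmul, leftExtend_tmul,
      ← mul_assoc, Algebra.TensorProduct.tmul_mul_tmul, one_mul]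
  | add x y hx hy => simp_all [mul_add]

theorem leftExtend_comp (g h : A →ₗ[R] A ⊗[R] A) :
    leftExtend g ∘ₗ leftExtend h = leftExtend (leftExtend g ∘ₗ h) :=
  TensorProduct.ext' fun a b => by simp [leftExtend_tmul, leftExtend_tmul_one_mul]

theorem leftExtend_includeRight :
    leftExtend (Algebra.TensorProduct.includeRight : A →ₐ[R] A ⊗[R] A).toLinearMap =
      LinearMap.id :=
  TensorProduct.ext' fun a b => by simp [leftExtend_tmul]

end TensorProduct

theorem Bialgebra.rTensor_unit_counit_comp_comul (R A : Type*) [CommSemiring R] [Semiring A]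
    [Bialgebra R A] :
    (Algebra.linearMap R A ∘ₗ counit).rTensor A ∘ₗ comul =
      (Algebra.TensorProduct.includeRight : A →ₐ[R] A ⊗[R] A).toLinearMap := by
  rw [LinearMap.rTensor_comp, LinearMap.comp_assoc, rTensor_counit_comp_comul]
  ext
  simp

namespace HopfAlgebra

variable (R A : Type*) [CommSemiring R] [Semiring A] [HopfAlgebra R A]

theorem leftExtend_comul_comp_rTensor_antipode_comul :
    leftExtend comul ∘ₗ (antipode R).rTensor A ∘ₗ comul =
      (Algebra.TensorProduct.includeRight : A →ₐ[R] A ⊗[R] A).toLinearMap := by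
  -- coassociativity turns `S(b₁) b₂ ⊗ b₃` into `(μ ∘ (S ⊗ id) ∘ Δ)(b₁) ⊗ b₂`
  simp only [leftExtend, coassoc_simps]
  rw [← (antipode R).rTensor_def (M := A), mul_antipode_rTensor_comul, ← LinearMap.rTensor_def,
    Bialgebra.rTensor_unit_counit_comp_comul]

theorem leftExtend_rTensor_antipode_comul_comp_comul :
    leftExtend ((antipode R).rTensor A ∘ₗ comul) ∘ₗ comul =
      (Algebra.TensorProduct.includeRight : A →ₐ[R] A ⊗[R] A).toLinearMap := by
  simp only [leftExtend, coassoc_simps]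
  rw [← (antipode R).lTensor_def (M := A), mul_antipode_lTensor_comul, ← LinearMap.rTensor_def,
    Bialgebra.rTensor_unit_counit_comp_comul]

/-- The map `Φ(a ⊗ b) = (a ⊗ 1) Δ(b)`, with inverse `a ⊗ b ↦ a S(b₁) ⊗ b₂`. -/
noncomputable def galoisEquiv : A ⊗[R] A ≃ₗ[R] A ⊗[R] A :=
  LinearEquiv.ofLinearMap (leftExtend comul) (leftExtend ((antipode R).rTensor A ∘ₗ comul))
    (by rw [leftExtend_comp, leftExtend_comul_comp_rTensor_antipode_comul,
      leftExtend_includeRight])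
    (by rw [leftExtend_comp, leftExtend_rTensor_antipode_comul_comp_comul,
      leftExtend_includeRight])

variable {R A}

theorem galoisEquiv_tmul (a b : A) : galoisEquiv R A (a ⊗ₜ b) = (a ⊗ₜ 1) * comul b :=
  leftExtend_tmul _ a b

end HopfAlgebra

/-- If `{hᵢ}` is a `k`-basis of a Hopf algebra `H`, then `{hᵢ ⊗ 1}` is a basis of
`H ⊗ H` as a right `H`-module under `F · f = F·Δ(f)`: every element of `H ⊗ H`
is uniquely a finite sum `Σ (hᵢ ⊗ 1)·fᵢ` with `fᵢ ∈ H`. -/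
theorem tensor_free_right_module (k H ι : Type*) [Field k] [Ring H] [HopfAlgebra k H]
    (b : Module.Basis ι k H) (y : H ⊗[k] H) :
    ∃! c : ι →₀ H, y = c.sum fun i f => rAct k H (b i ⊗ₜ[k] (1 : H)) f := by
  classical
  let e := (TensorProduct.equivFinsuppOfBasisLeft b).symm ≪≫ₗ galoisEquiv k H
  have he (c : ι →₀ H) : e c = c.sum fun i f => rAct k H (b i ⊗ₜ[k] (1 : H)) f := by
    simp [e, map_finsuppSum, galoisEquiv_tmul, rAct]
  simpa only [he, eq_comm] using (Function.bijective_iff_existsUnique e).1 e.bijective y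
end

section
/- Let A be an associative topological algebra with commuting continuous derivations ∂₁,…,∂ₙ, H = k[T₁,…,Tₙ], and F(A) the H-module of continuous translation-invariant maps H → A. For a, b ∈ F(A) and f ∈ H define (a ₍f₎ b)(g) = a(f₍₁₎)·b(S(f₍₂₎)g), where Δ and S are the standard coproduct and antipode of H. Then a ₍f₎ b is again translation-invariant, i.e. (a ₍f₎ b)(∂g/∂Tᵢ) = ∂ᵢ((a ₍f₎ b)(g)) for all g ∈ H and all i. -/
open MvPolynomial

/-- The topology on `H = k[T₁,…,Tₙ]` given by the powers of the augmentation ideal. -/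
noncomputable def Htop (k : Type*) [Field k] (n : ℕ) :
    TopologicalSpace (MvPolynomial (Fin n) k) :=
  (RingHom.ker (constantCoeff : MvPolynomial (Fin n) k →+* k)).adicTopology

/-- The antipode `S` of the Hopf algebra `H = k[T₁,…,Tₙ]`: `S(Tᵢ) = −Tᵢ`. -/
noncomputable def antipodeH (k : Type*) [Field k] (n : ℕ) :
    MvPolynomial (Fin n) k →ₐ[k] MvPolynomial (Fin n) k :=
  aeval fun i => -X i

/-- The coproduct `Δ(f) = f₍₁₎ ⊗ f₍₂₎` of `H = k[T₁,…,Tₙ]` (`Δ(Tᵢ) = Tᵢ⊗1 + 1⊗Tᵢ`),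
realised concretely: `k[T] ⊗ k[T] ≅ k[T ⊕ T] ≅ (k[T])[T]`, so `Δ(f)` is recorded as a
polynomial in the first group of variables whose coefficients (the second Sweedler
factors) lie in `H`. -/
noncomputable def sweedler {k : Type*} [Field k] {n : ℕ}
    (f : MvPolynomial (Fin n) k) :
    MvPolynomial (Fin n) (MvPolynomial (Fin n) k) :=
  sumAlgEquiv k (Fin n) (Fin n)
    ((aeval fun i => X (Sum.inl i) + X (Sum.inr i)) f)

/-- The conformal product `(a ₍f₎ b)(g) = Σ a(f₍₁₎) · b(S(f₍₂₎)·g)` on linear maps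
`H → A`, using the Sweedler decomposition `Δf = Σ f₍₁₎ ⊗ f₍₂₎`. -/
noncomputable def confProd {k : Type*} [Field k] {n : ℕ} {A : Type*}
    [Ring A] [Algebra k A]
    (a b : MvPolynomial (Fin n) k →ₗ[k] A) (f : MvPolynomial (Fin n) k) :
    MvPolynomial (Fin n) k →ₗ[k] A :=
  ∑ m ∈ (sweedler f).support,
    (LinearMap.mulLeft k (a (monomial m 1))) ∘ₗ b ∘ₗ
      (LinearMap.mulLeft k (antipodeH k n (coeff m (sweedler f))))

/-!
Write `Δf = Σ f₍₁₎ ⊗ f₍₂₎` as the polynomial `sweedler f` with coefficients in `H`. Then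
`(a ₍f₎ b)(g) = Σ B_g(f₍₁₎, f₍₂₎)` for the biadditive map `B_g(x, y) = a(x) · b(S(y) · g)`.
By the Leibniz rule, translation invariance of `a` and `b`, and `∂ᵢ ∘ S = -S ∘ ∂ᵢ`,
`∂ᵢ(B_g(x, y)) = B_g(∂ᵢx, y) - B_g(x, ∂ᵢy) + B_{∂ᵢg}(x, y)`.
After summing over `Δf` the first two terms cancel, because `Δ` intertwines `∂ᵢ` with both
`∂ᵢ ⊗ 1` and `1 ⊗ ∂ᵢ`; what is left is `(a ₍f₎ b)(∂ᵢg)`.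
-/

namespace MvPolynomial

variable {R σ τ : Type*} [CommSemiring R]

lemma pderiv_aeval [Fintype σ] (v : σ → MvPolynomial τ R) (t : τ)
    (f : MvPolynomial σ R) :
    pderiv t (aeval v f) = ∑ j, aeval v (pderiv j f) * pderiv t (v j) := by
  classical
  induction f using induction_on with
  | C r => simp
  | add p q hp hq => simp only [map_add, hp, hq, add_mul, Finset.sum_add_distrib]
  | mul_X p j hp =>
    simp only [map_mul, aeval_X, pderiv_mul, map_add, hp, add_mul, Finset.sum_add_distrib,
      Finset.sum_mul, pderiv_X]
    simp [Pi.single_apply, mul_right_comm]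

lemma pderiv_aeval_inl_add_inr [Fintype σ] (t : σ ⊕ σ) (f : MvPolynomial σ R) :
    pderiv t (aeval (fun j => (X (Sum.inl j) + X (Sum.inr j) : MvPolynomial (σ ⊕ σ) R)) f) =
      aeval (fun j => X (Sum.inl j) + X (Sum.inr j)) (pderiv (Sum.elim id id t) f) := by
  classical
  rw [pderiv_aeval]
  rcases t with i | i <;> simp [pderiv_X, Pi.single_apply]

lemma pderiv_inr_rename_inl (j : τ) (p : MvPolynomial σ R) :
    pderiv (Sum.inr j) (rename Sum.inl p) = 0 := by
  induction p using induction_on with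
  | C r => simp
  | add p q hp hq => simp [hp, hq]
  | mul_X p l hp => simp [hp]

lemma sumAlgEquiv_symm_monomial (m : σ →₀ ℕ) (c : MvPolynomial τ R) :
    (sumAlgEquiv R σ τ).symm (monomial m c) =
      rename Sum.inl (monomial m 1) * rename Sum.inr c := by
  apply (sumAlgEquiv R σ τ).injective
  rw [AlgEquiv.apply_symm_apply, map_mul]
  have hl : sumAlgEquiv R σ τ (rename Sum.inl (monomial m 1)) = monomial m 1 := by
    simpa using AlgHom.congr_fun (sumAlgEquiv_comp_rename_inl R σ τ) (monomial m 1)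
  have hr : sumAlgEquiv R σ τ (rename Sum.inr c) = C c :=
    AlgHom.congr_fun (sumAlgEquiv_comp_rename_inr R σ τ) c
  rw [hl, hr, mul_comm, C_mul_monomial, mul_one]

lemma sumAlgEquiv_pderiv_inr (j : τ) (x : MvPolynomial (σ ⊕ τ) R) :
    sumAlgEquiv R σ τ (pderiv (Sum.inr j) x) =
      AddMonoidAlgebra.map (pderiv j).toAddMonoidHom (sumAlgEquiv R σ τ x) := by
  obtain ⟨Q, rfl⟩ := (sumAlgEquiv R σ τ).symm.surjective x
  rw [AlgEquiv.apply_symm_apply]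
  induction Q using induction_on' with
  | monomial m c =>
    rw [sumAlgEquiv_symm_monomial, Derivation.leibniz, pderiv_inr_rename_inl, smul_zero,
      add_zero, pderiv_rename Sum.inr_injective, smul_eq_mul, ← sumAlgEquiv_symm_monomial,
      AlgEquiv.apply_symm_apply, ← single_eq_monomial, ← single_eq_monomial,
      AddMonoidAlgebra.map_single]
    rfl
  | add p q hp hq => simp [AddMonoidAlgebra.map_add, hp, hq]

end MvPolynomial

section SweedlerSum

variable {σ R S A : Type*} [CommSemiring R] [CommSemiring S] [AddCommMonoid A]

-- `Σ B(P₍₁₎, P₍₂₎)` for `P ∈ R[σ] ⊗ S`, stored as a polynomial over `S` as in `sweedler`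
noncomputable def sweedlerSum (B : MvPolynomial σ R →+ S →+ A) : MvPolynomial σ S →+ A :=
  (Finsupp.liftAddHom fun m => B (monomial m 1)).comp
    AddMonoidAlgebra.coeffAddEquiv.toAddMonoidHom

@[simp]
lemma sweedlerSum_monomial (B : MvPolynomial σ R →+ S →+ A) (m : σ →₀ ℕ) (c : S) :
    sweedlerSum B (monomial m c) = B (monomial m 1) c := by
  simp [sweedlerSum, ← single_eq_monomial]

lemma sweedlerSum_apply (B : MvPolynomial σ R →+ S →+ A) (P : MvPolynomial σ S) :
    sweedlerSum B P = ∑ m ∈ P.support, B (monomial m 1) (coeff m P) := by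
  simp [sweedlerSum, Finsupp.liftAddHom_apply, sum_def]

lemma sweedlerSum_add (B₁ B₂ : MvPolynomial σ R →+ S →+ A) :
    sweedlerSum (B₁ + B₂) = sweedlerSum B₁ + sweedlerSum B₂ :=
  AddMonoidAlgebra.addMonoidHom_ext fun m c => by simp [single_eq_monomial]

lemma sweedlerSum_sub {G : Type*} [AddCommGroup G] (B₁ B₂ : MvPolynomial σ R →+ S →+ G) :
    sweedlerSum (B₁ - B₂) = sweedlerSum B₁ - sweedlerSum B₂ :=
  AddMonoidAlgebra.addMonoidHom_ext fun m c => by simp [single_eq_monomial]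

lemma comp_sweedlerSum {A' : Type*} [AddCommMonoid A'] (D : A →+ A')
    (B : MvPolynomial σ R →+ S →+ A) :
    D.comp (sweedlerSum B) = sweedlerSum (B.compr₂ D) :=
  AddMonoidAlgebra.addMonoidHom_ext fun m c => by simp [single_eq_monomial]

lemma sweedlerSum_map {S' : Type*} [CommSemiring S'] (B : MvPolynomial σ R →+ S' →+ A)
    (φ : S →+ S') (P : MvPolynomial σ S) :
    sweedlerSum B (AddMonoidAlgebra.map φ P) = sweedlerSum (B.compl₂ φ) P := by
  induction P using MvPolynomial.induction_on' with
  | monomial m c =>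
    rw [← single_eq_monomial, AddMonoidAlgebra.map_single]
    simp only [single_eq_monomial, sweedlerSum_monomial]
    rfl
  | add p q hp hq => simp [AddMonoidAlgebra.map_add, hp, hq]

lemma sweedlerSum_pderiv (B : MvPolynomial σ R →+ S →+ A) (i : σ) (P : MvPolynomial σ S) :
    sweedlerSum B (pderiv i P) = sweedlerSum (B.comp (pderiv i).toAddMonoidHom) P := by
  induction P using MvPolynomial.induction_on' with
  | monomial m c =>
    rw [sweedlerSum_monomial, pderiv_monomial, sweedlerSum_monomial]
    show B _ _ = B (pderiv i (monomial m 1)) c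
    rw [← nsmul_eq_mul', map_nsmul, pderiv_monomial, one_mul, ← nsmul_one,
      ← smul_monomial, map_nsmul, AddMonoidHom.nsmul_apply]
  | add p q hp hq => simp [hp, hq]

end SweedlerSum

section Hopf

variable {k : Type*} [Field k] {n : ℕ}

lemma pderiv_sweedler (i : Fin n) (f : MvPolynomial (Fin n) k) :
    pderiv i (sweedler f) = sweedler (pderiv i f) := by
  rw [sweedler, pderiv_sumAlgEquiv, pderiv_aeval_inl_add_inr]
  rfl

lemma sweedler_pderiv (i : Fin n) (f : MvPolynomial (Fin n) k) :
    sweedler (pderiv i f) = AddMonoidAlgebra.map (pderiv i).toAddMonoidHom (sweedler f) := by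
  rw [sweedler, sweedler, ← sumAlgEquiv_pderiv_inr, pderiv_aeval_inl_add_inr]
  rfl

-- `(∂ᵢ ⊗ 1) ∘ Δ = Δ ∘ ∂ᵢ = (1 ⊗ ∂ᵢ) ∘ Δ`
lemma sweedlerSum_comp_pderiv_eq_compl₂_pderiv {A : Type*} [AddCommMonoid A]
    (B : MvPolynomial (Fin n) k →+ MvPolynomial (Fin n) k →+ A) (i : Fin n)
    (f : MvPolynomial (Fin n) k) :
    sweedlerSum (B.comp (pderiv i).toAddMonoidHom) (sweedler f) =
      sweedlerSum (B.compl₂ (pderiv i).toAddMonoidHom) (sweedler f) := by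
  rw [← sweedlerSum_pderiv, pderiv_sweedler, sweedler_pderiv, sweedlerSum_map]

lemma pderiv_antipodeH (i : Fin n) (f : MvPolynomial (Fin n) k) :
    pderiv i (antipodeH k n f) = -antipodeH k n (pderiv i f) := by
  rw [antipodeH, pderiv_aeval]
  simp [pderiv_X, Pi.single_apply]

end Hopf

section ConfPairing

variable {k : Type*} [Field k] {n : ℕ} {A : Type*} [Ring A] [Algebra k A]
  (a b : MvPolynomial (Fin n) k →ₗ[k] A)

noncomputable def confPairing (g : MvPolynomial (Fin n) k) :
    MvPolynomial (Fin n) k →+ MvPolynomial (Fin n) k →+ A :=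
  (AddMonoidHom.mul.comp a.toAddMonoidHom).compl₂
    (b.toAddMonoidHom.comp ((AddMonoidHom.mulRight g).comp (antipodeH k n).toAddMonoidHom))

@[simp]
lemma confPairing_apply (g x y : MvPolynomial (Fin n) k) :
    confPairing a b g x y = a x * b (antipodeH k n y * g) := rfl

lemma confProd_apply (f g : MvPolynomial (Fin n) k) :
    confProd a b f g = sweedlerSum (confPairing a b g) (sweedler f) := by
  simp [confProd, sweedlerSum_apply]

lemma confPairing_compr₂_of_leibniz (D : A →+ A) (hD : ∀ x y, D (x * y) = D x * y + x * D y)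
    (i : Fin n) (ha : ∀ f, a (pderiv i f) = D (a f)) (hb : ∀ f, b (pderiv i f) = D (b f))
    (g : MvPolynomial (Fin n) k) :
    (confPairing a b g).compr₂ D =
      (confPairing a b g).comp (pderiv i).toAddMonoidHom -
        (confPairing a b g).compl₂ (pderiv i).toAddMonoidHom + confPairing a b (pderiv i g) := by
  refine AddMonoidHom.ext fun x => AddMonoidHom.ext fun y => ?_
  simp only [AddMonoidHom.compr₂_apply, AddMonoidHom.add_apply, AddMonoidHom.sub_apply,
    AddMonoidHom.comp_apply, AddMonoidHom.compl₂_apply, LinearMap.toAddMonoidHom_coe,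
    Derivation.coeFn_coe, confPairing_apply]
  rw [hD, ← ha, ← hb, pderiv_mul, pderiv_antipodeH, neg_mul, map_add, map_neg, mul_add, mul_neg]
  abel

end ConfPairing

theorem confProd_translation_invariant_general (k : Type*) [Field k] (n : ℕ)
    (A : Type*) [Ring A] [Algebra k A]
    (D : Fin n → A → A)
    (hDadd : ∀ i x y, D i (x + y) = D i x + D i y)
    (hDleib : ∀ i x y, D i (x * y) = D i x * y + x * D i y)
    (a b : MvPolynomial (Fin n) k →ₗ[k] A)
    (hainv : ∀ (i : Fin n) (f : MvPolynomial (Fin n) k), a (pderiv i f) = D i (a f))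
    (hbinv : ∀ (i : Fin n) (f : MvPolynomial (Fin n) k), b (pderiv i f) = D i (b f)) :
    ∀ (f : MvPolynomial (Fin n) k) (i : Fin n) (g : MvPolynomial (Fin n) k),
      confProd a b f (pderiv i g) = D i (confProd a b f g) := by
  intro f i g
  let Di : A →+ A := AddMonoidHom.mk' (D i) (hDadd i)
  have hleib := confPairing_compr₂_of_leibniz a b Di (hDleib i) i (hainv i) (hbinv i) g
  calc confProd a b f (pderiv i g)
        = sweedlerSum (confPairing a b (pderiv i g)) (sweedler f) := confProd_apply a b f _
    _ = sweedlerSum ((confPairing a b g).compr₂ Di) (sweedler f) := by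
      rw [hleib, sweedlerSum_add, sweedlerSum_sub, AddMonoidHom.add_apply, AddMonoidHom.sub_apply,
        sweedlerSum_comp_pderiv_eq_compl₂_pderiv, sub_self, zero_add]
    _ = D i (confProd a b f g) := by
      rw [← comp_sweedlerSum, confProd_apply]
      rfl

/-- If `a, b ∈ F(A)` are continuous translation-invariant maps, then `a ₍f₎ b` is again
translation-invariant: `(a ₍f₎ b)(∂g/∂Tᵢ) = ∂ᵢ((a ₍f₎ b)(g))`. -/
theorem confProd_translation_invariant (k : Type*) [Field k] [CharZero k] (n : ℕ)
    (A : Type*) [Ring A] [Algebra k A] [TopologicalSpace A] [IsTopologicalRing A]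
    (D : Fin n → A → A)
    (hDcont : ∀ i, Continuous (D i))
    (hDadd : ∀ i x y, D i (x + y) = D i x + D i y)
    (hDleib : ∀ i x y, D i (x * y) = D i x * y + x * D i y)
    (hDcomm : ∀ i j, D i ∘ D j = D j ∘ D i)
    (a b : MvPolynomial (Fin n) k →ₗ[k] A)
    (hacont : @Continuous _ _ (Htop k n) _ a)
    (hbcont : @Continuous _ _ (Htop k n) _ b)
    (hainv : ∀ (i : Fin n) (f : MvPolynomial (Fin n) k), a (pderiv i f) = D i (a f))
    (hbinv : ∀ (i : Fin n) (f : MvPolynomial (Fin n) k), b (pderiv i f) = D i (b f)) :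
    ∀ (f : MvPolynomial (Fin n) k) (i : Fin n) (g : MvPolynomial (Fin n) k),
      confProd a b f (pderiv i g) = D i (confProd a b f g) :=
  confProd_translation_invariant_general k n A D hDadd hDleib a b hainv hbinv
end

section
/- Let A be a semiprime TC-algebra (an associative topological algebra A with commuting continuous locally nilpotent derivations ∂₁,…,∂ₙ such that A = {a(f) : a ∈ F(A), f ∈ H} and A has no nonzero nilpotent ∂ᵢ-invariant ideals). If J ⊆ F(A) is an H-submodule closed under all operations (· ₍f₎ ·) with J ₍f₎ J = 0 for all f ∈ H (J is an abelian ideal of the conformal structure), and J ≠ 0, then the k-span of {a(f) : a ∈ J, f ∈ H} is a nonzero ideal I of A with I² = 0 — contradiction; hence F(A) has no nonzero abelian conformal ideal. -/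
open MvPolynomial

/-- The action of the variable `Tᵢ` on linear maps `H → A`: `(Tᵢ·a)(f) = −a(∂f/∂Tᵢ)`. -/
noncomputable def Tact {k : Type*} [Field k] {n : ℕ} {A : Type*}
    [AddCommGroup A] [Module k A] (i : Fin n)
    (a : MvPolynomial (Fin n) k →ₗ[k] A) : MvPolynomial (Fin n) k →ₗ[k] A :=
  -(a ∘ₗ (pderiv i).toLinearMap)

/-!
The values `a(f)`, `a ∈ J`, generate an additive subgroup `I` of `A`. Since
`Δ(T^d) = T^d ⊗ 1 + Σ_{m < d} T^m ⊗ h_m`, the identity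
`(a ₍T^d₎ b)(g) = a(T^d) b(g) + Σ_{m < d} a(T^m) b(S(h_m) g)` lets one solve for `a(f) b(g)` by
induction on `d`: it lies in the additive span of the values of the maps `a ₍f'₎ b`. Hence
`A · I ⊆ I` and `I · A ⊆ I` because `J` is a conformal ideal and every element of `A` is a value
of some `a ∈ F(A)`, `I · I = 0` because `J ₍f₎ J = 0`, and `∂ᵢ I ⊆ I` by translation invariance.
Semiprimality forces `I = 0`.
-/

namespace MvPolynomial

variable {σ R : Type*} [CommSemiring R]

def IsUnitriangularAt (d : σ →₀ ℕ) (p : MvPolynomial σ R) : Prop :=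
  coeff d p = 1 ∧ ∀ m ∈ p.support, m ≤ d

theorem isUnitriangularAt_one : IsUnitriangularAt 0 (1 : MvPolynomial σ R) := by
  classical
  refine ⟨coeff_zero_one, fun m hm => ?_⟩
  rw [mem_support_iff, coeff_one] at hm
  split_ifs at hm with h
  exacts [h ▸ le_rfl, absurd rfl hm]

theorem IsUnitriangularAt.mul {d e : σ →₀ ℕ} {p q : MvPolynomial σ R}
    (hp : IsUnitriangularAt d p) (hq : IsUnitriangularAt e q) :
    IsUnitriangularAt (d + e) (p * q) := by
  classical
  refine ⟨?_, fun m hm => ?_⟩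
  · rw [coeff_mul, Finset.sum_eq_single (d, e)]
    · rw [hp.1, hq.1, one_mul]
    · rintro ⟨u, v⟩ huv hne
      by_contra h
      have hu := hp.2 u (mem_support_iff.2 (left_ne_zero_of_mul h))
      have hv := hq.2 v (mem_support_iff.2 (right_ne_zero_of_mul h))
      rw [Finset.HasAntidiagonal.mem_antidiagonal, add_eq_add_iff_eq_and_eq hu hv] at huv
      exact hne (Prod.ext huv.1 huv.2)
    · simp
  · obtain ⟨u, hu, v, hv, rfl⟩ := Finset.mem_add.1 (support_mul p q hm)
    exact add_le_add (hp.2 u hu) (hq.2 v hv)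

theorem IsUnitriangularAt.pow {d : σ →₀ ℕ} {p : MvPolynomial σ R}
    (hp : IsUnitriangularAt d p) (r : ℕ) : IsUnitriangularAt (r • d) (p ^ r) := by
  induction r with
  | zero => simpa using isUnitriangularAt_one
  | succ r ih => rw [pow_succ, succ_nsmul]; exact ih.mul hp

theorem isUnitriangularAt_X_add_C (i : σ) (a : R) :
    IsUnitriangularAt (Finsupp.single i 1) (X i + C a) := by
  classical
  refine ⟨by simp [coeff_X, coeff_C, eq_comm (a := (0 : σ →₀ ℕ))], fun m hm => ?_⟩
  rw [mem_support_iff, coeff_add, coeff_X, coeff_C] at hm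
  by_cases h : Finsupp.single i 1 = m
  · exact h.ge
  · have : m = 0 := by by_contra h'; simp_all
    exact this ▸ fun _ => Nat.zero_le _

end MvPolynomial

section Conformal

variable {k : Type*} [Field k] {n : ℕ}

theorem sweedler_eq_aeval (f : MvPolynomial (Fin n) k) :
    sweedler f = aeval (fun i => X i + C (X i)) f := by
  have h : (sumAlgEquiv k (Fin n) (Fin n)).toAlgHom.comp
      (aeval fun i => X (Sum.inl i) + X (Sum.inr i)) = aeval (fun i => X i + C (X i)) :=
    algHom_ext fun i => by simp [sumAlgEquiv_X_inl, sumAlgEquiv_X_inr]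
  exact DFunLike.congr_fun h f

theorem isUnitriangularAt_sweedler_monomial (d : Fin n →₀ ℕ) :
    IsUnitriangularAt d (sweedler (monomial d (1 : k))) := by
  induction d using Finsupp.induction_linear with
  | zero => simpa [sweedler_eq_aeval] using isUnitriangularAt_one
  | add d e hd he =>
    rw [← mul_one (1 : k), ← monomial_mul, sweedler_eq_aeval, map_mul, ← sweedler_eq_aeval,
      ← sweedler_eq_aeval]
    exact hd.mul he
  | single i r =>
    rw [← X_pow_eq_monomial, sweedler_eq_aeval, map_pow, aeval_X, ← Finsupp.smul_single_one]
    exact (isUnitriangularAt_X_add_C i (X i)).pow r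

variable {A : Type*} [Ring A] [Algebra k A]

theorem confProd_apply_s14 (a b : MvPolynomial (Fin n) k →ₗ[k] A) (f g : MvPolynomial (Fin n) k) :
    confProd a b f g = ∑ m ∈ (sweedler f).support,
      a (monomial m 1) * b (antipodeH k n (coeff m (sweedler f)) * g) := by
  simp [confProd, LinearMap.sum_apply]

theorem monomial_mul_mem_of_confProd_mem {a b : MvPolynomial (Fin n) k →ₗ[k] A}
    {P : AddSubgroup A} (hP : ∀ f g, confProd a b f g ∈ P) (d : Fin n →₀ ℕ)
    (g : MvPolynomial (Fin n) k) : a (monomial d 1) * b g ∈ P := by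
  induction d using WellFoundedLT.induction generalizing g with
  | ind d ih =>
    obtain ⟨hd, hle⟩ := isUnitriangularAt_sweedler_monomial (k := k) d
    have hds : d ∈ (sweedler (monomial d (1 : k))).support := mem_support_iff.2 (by simp [hd])
    have hsplit := confProd_apply_s14 a b (monomial d 1) g
    rw [← Finset.add_sum_erase _ _ hds, hd, map_one (antipodeH k n), one_mul] at hsplit
    rw [eq_sub_of_add_eq hsplit.symm]
    refine sub_mem (hP _ _) (sum_mem fun m hm => ?_)
    obtain ⟨hmd, hm⟩ := Finset.mem_erase.1 hm
    exact ih m (lt_of_le_of_ne (hle m hm) hmd) _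

theorem mul_mem_of_confProd_mem {a b : MvPolynomial (Fin n) k →ₗ[k] A}
    {P : AddSubgroup A} (hP : ∀ f g, confProd a b f g ∈ P) (f g : MvPolynomial (Fin n) k) :
    a f * b g ∈ P := by
  induction f using MvPolynomial.induction_on' generalizing g with
  | monomial d c =>
    -- `P` is only an additive subgroup, so the scalar `c` is moved into the argument of `b`.
    have hc : monomial d c = c • monomial d 1 := by rw [smul_monomial, smul_eq_mul, mul_one]
    rw [hc, map_smul, smul_mul_assoc, ← mul_smul_comm, ← map_smul]
    exact monomial_mul_mem_of_confProd_mem hP d _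
  | add f f' hf hf' => rw [map_add, add_mul]; exact add_mem (hf g) (hf' g)

def valuesSubgroup (J : Set (MvPolynomial (Fin n) k →ₗ[k] A)) : AddSubgroup A :=
  AddSubgroup.closure {x | ∃ c ∈ J, ∃ h, c h = x}

variable {J : Set (MvPolynomial (Fin n) k →ₗ[k] A)}

theorem apply_mem_valuesSubgroup {c : MvPolynomial (Fin n) k →ₗ[k] A} (hc : c ∈ J)
    (h : MvPolynomial (Fin n) k) : c h ∈ valuesSubgroup J :=
  AddSubgroup.subset_closure ⟨c, hc, h, rfl⟩

theorem map_mem_valuesSubgroup {B : Type*} [AddGroup B] {K : AddSubgroup B} (φ : A →+ B)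
    (hφ : ∀ c ∈ J, ∀ h, φ (c h) ∈ K) {x : A} (hx : x ∈ valuesSubgroup J) : φ x ∈ K :=
  (AddSubgroup.closure_le (K.comap φ)).2 (by rintro _ ⟨c, hc, h, rfl⟩; exact hφ c hc h) hx

theorem mul_mem_valuesSubgroup_left {a : MvPolynomial (Fin n) k →ₗ[k] A}
    (ha : ∀ c ∈ J, ∀ f, confProd a c f ∈ J) (f : MvPolynomial (Fin n) k) {y : A}
    (hy : y ∈ valuesSubgroup J) : a f * y ∈ valuesSubgroup J :=
  map_mem_valuesSubgroup (AddMonoidHom.mulLeft (a f))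
    (fun c hc h => mul_mem_of_confProd_mem
      (fun f' g => apply_mem_valuesSubgroup (ha c hc f') g) f h) hy

theorem mul_mem_valuesSubgroup_right {a : MvPolynomial (Fin n) k →ₗ[k] A}
    (ha : ∀ c ∈ J, ∀ f, confProd c a f ∈ J) (f : MvPolynomial (Fin n) k) {y : A}
    (hy : y ∈ valuesSubgroup J) : y * a f ∈ valuesSubgroup J :=
  map_mem_valuesSubgroup (AddMonoidHom.mulRight (a f))
    (fun c hc h => mul_mem_of_confProd_mem
      (fun f' g => apply_mem_valuesSubgroup (ha c hc f') g) h f) hy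

theorem mul_eq_zero_of_mem_valuesSubgroup (hJ : ∀ a ∈ J, ∀ b ∈ J, ∀ f, confProd a b f = 0)
    {x y : A} (hx : x ∈ valuesSubgroup J) (hy : y ∈ valuesSubgroup J) : x * y = 0 := by
  have hvalue : ∀ c ∈ J, ∀ h, c h * y = 0 := fun c hc h =>
    map_mem_valuesSubgroup (K := ⊥) (AddMonoidHom.mulLeft (c h))
      (fun c' hc' h' => mul_mem_of_confProd_mem (fun f g => by simp [hJ c hc c' hc' f]) h h') hy
  exact map_mem_valuesSubgroup (K := ⊥) (AddMonoidHom.mulRight y)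
    (fun c hc h => AddSubgroup.mem_bot.2 (hvalue c hc h)) hx

end Conformal

theorem semiprime_no_abelian_conformal_ideal_general (k : Type*) [Field k] (n : ℕ)
    (A : Type*) [Ring A] [Algebra k A] [TopologicalSpace A]
    (D : Fin n → A → A)
    (hDadd : ∀ i x y, D i (x + y) = D i x + D i y)
    -- `A = A(F(A))`: every element of `A` is a value of some continuous
    -- translation-invariant map
    (htc : ∀ x : A, ∃ a : MvPolynomial (Fin n) k →ₗ[k] A,
      (@Continuous _ _ (Htop k n) _ a ∧
        ∀ (i : Fin n) (f : MvPolynomial (Fin n) k), a (pderiv i f) = D i (a f)) ∧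
      ∃ f, a f = x)
    -- `A` is semiprime: no nonzero nilpotent `∂`-invariant (two-sided) ideals
    (hsp : ∀ I : TwoSidedIdeal A, (∀ (i : Fin n), ∀ x ∈ I, D i x ∈ I) →
      (∀ x ∈ I, ∀ y ∈ I, x * y = 0) → ∀ x ∈ I, x = 0)
    -- `J` is an abelian conformal ideal of `F(A)`:
    (J : Set (MvPolynomial (Fin n) k →ₗ[k] A))
    (hJF : ∀ a ∈ J, @Continuous _ _ (Htop k n) _ a ∧
      ∀ (i : Fin n) (f : MvPolynomial (Fin n) k), a (pderiv i f) = D i (a f))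
    (hJideal : ∀ a : MvPolynomial (Fin n) k →ₗ[k] A,
      (@Continuous _ _ (Htop k n) _ a ∧
        ∀ (i : Fin n) (f : MvPolynomial (Fin n) k), a (pderiv i f) = D i (a f)) →
      ∀ b ∈ J, ∀ f : MvPolynomial (Fin n) k, confProd a b f ∈ J ∧ confProd b a f ∈ J)
    (hJab : ∀ a ∈ J, ∀ b ∈ J, ∀ f : MvPolynomial (Fin n) k, confProd a b f = 0) :
    ∀ a ∈ J, a = 0 := by
  have hmul : ∀ x, ∀ y ∈ valuesSubgroup J,
      x * y ∈ valuesSubgroup J ∧ y * x ∈ valuesSubgroup J := by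
    intro x y hy
    obtain ⟨b, hb, f, rfl⟩ := htc x
    exact ⟨mul_mem_valuesSubgroup_left (fun c hc f => (hJideal b hb c hc f).1) f hy,
      mul_mem_valuesSubgroup_right (fun c hc f => (hJideal b hb c hc f).2) f hy⟩
  let I : TwoSidedIdeal A := .mk' (valuesSubgroup J) (zero_mem _) add_mem neg_mem
    (fun hy => (hmul _ _ hy).1) (fun hx => (hmul _ _ hx).2)
  have hI : ∀ x, x ∈ I ↔ x ∈ valuesSubgroup J := TwoSidedIdeal.mem_mk' _ _ _ _ _ _
  have hDI : ∀ i, ∀ x ∈ I, D i x ∈ I := by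
    intro i x hx
    have hvalues : ∀ c ∈ J, ∀ h, D i (c h) ∈ valuesSubgroup J := fun c hc h =>
      (hJF c hc).2 i h ▸ apply_mem_valuesSubgroup hc (pderiv i h)
    exact (hI _).2 (map_mem_valuesSubgroup (AddMonoidHom.mk' (D i) (hDadd i)) hvalues ((hI x).1 hx))
  have hI2 : ∀ x ∈ I, ∀ y ∈ I, x * y = 0 := fun x hx y hy =>
    mul_eq_zero_of_mem_valuesSubgroup hJab ((hI x).1 hx) ((hI y).1 hy)
  exact fun a ha => LinearMap.ext fun f =>
    hsp I hDI hI2 (a f) ((hI _).2 (apply_mem_valuesSubgroup ha f))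

/-- Let `A` be a semiprime TC-algebra (a topological algebra with commuting continuous
locally nilpotent derivations `∂ᵢ`, every element of which has the form `a(f)` with
`a ∈ F(A)` continuous translation-invariant, and with no nonzero `∂`-invariant ideal
of square zero).  Then the conformal algebra `F(A)` has no nonzero abelian conformal
ideal: any `H`-submodule `J ⊆ F(A)` which is an ideal for the conformal products and
satisfies `J ₍f₎ J = 0` for all `f` is zero. -/
theorem semiprime_no_abelian_conformal_ideal (k : Type*) [Field k] [CharZero k] (n : ℕ)
    (A : Type*) [Ring A] [Algebra k A] [TopologicalSpace A] [IsTopologicalRing A]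
    (D : Fin n → A → A)
    (hDcont : ∀ i, Continuous (D i))
    (hDadd : ∀ i x y, D i (x + y) = D i x + D i y)
    (hDleib : ∀ i x y, D i (x * y) = D i x * y + x * D i y)
    (hDcomm : ∀ i j, D i ∘ D j = D j ∘ D i)
    (hDnilp : ∀ i x, ∃ N : ℕ, (D i)^[N] x = 0)
    -- `A = A(F(A))`: every element of `A` is a value of some continuous
    -- translation-invariant map
    (htc : ∀ x : A, ∃ a : MvPolynomial (Fin n) k →ₗ[k] A,
      (@Continuous _ _ (Htop k n) _ a ∧
        ∀ (i : Fin n) (f : MvPolynomial (Fin n) k), a (pderiv i f) = D i (a f)) ∧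
      ∃ f, a f = x)
    -- `A` is semiprime: no nonzero nilpotent `∂`-invariant (two-sided) ideals
    (hsp : ∀ I : TwoSidedIdeal A, (∀ (i : Fin n), ∀ x ∈ I, D i x ∈ I) →
      (∀ x ∈ I, ∀ y ∈ I, x * y = 0) → ∀ x ∈ I, x = 0)
    -- `J` is an abelian conformal ideal of `F(A)`:
    (J : Set (MvPolynomial (Fin n) k →ₗ[k] A))
    (hJF : ∀ a ∈ J, @Continuous _ _ (Htop k n) _ a ∧
      ∀ (i : Fin n) (f : MvPolynomial (Fin n) k), a (pderiv i f) = D i (a f))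
    (hJadd : ∀ a ∈ J, ∀ b ∈ J, a + b ∈ J)
    (hJsmul : ∀ (c : k), ∀ a ∈ J, c • a ∈ J)
    (hJT : ∀ a ∈ J, ∀ i : Fin n, Tact i a ∈ J)
    (hJideal : ∀ a : MvPolynomial (Fin n) k →ₗ[k] A,
      (@Continuous _ _ (Htop k n) _ a ∧
        ∀ (i : Fin n) (f : MvPolynomial (Fin n) k), a (pderiv i f) = D i (a f)) →
      ∀ b ∈ J, ∀ f : MvPolynomial (Fin n) k, confProd a b f ∈ J ∧ confProd b a f ∈ J)
    (hJab : ∀ a ∈ J, ∀ b ∈ J, ∀ f : MvPolynomial (Fin n) k, confProd a b f = 0) :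
    ∀ a ∈ J, a = 0 :=
  semiprime_no_abelian_conformal_ideal_general k n A D hDadd htc hsp J hJF hJideal hJab
end

section
/- Let A be a matrix Weyl algebra ideal A = M_N(A₁)·Q(p) ⊆ M_N(A₁) where A₁ is the first Weyl algebra and Q is an N×N matrix over k[p] with det Q ≠ 0. Then A is a left ideal of M_N(A₁) closed under the derivation ∂ = [·, p], and A is dense in M_N(A₁) with respect to the q-adic topology. -/
open FreeAlgebra

/-- The defining relation `[q,p] = 1` (i.e. `qp = pq + 1`) of the first Weyl algebra,
with `p = ι true`, `q = ι false`. -/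
inductive W1Rel (k : Type*) [Field k] :
    FreeAlgebra k Bool → FreeAlgebra k Bool → Prop
  | qp : W1Rel k (ι k false * ι k true) (ι k true * ι k false + 1)

/-- The first Weyl algebra `A₁ = k⟨p,q | [q,p] = 1⟩`. -/
abbrev Weyl1 (k : Type*) [Field k] := RingQuot (W1Rel k)

/-- The generator `p` of the Weyl algebra. -/
noncomputable def pgen (k : Type*) [Field k] : Weyl1 k :=
  RingQuot.mkAlgHom k (W1Rel k) (ι k true)

/-- The generator `q` of the Weyl algebra. -/
noncomputable def qgen (k : Type*) [Field k] : Weyl1 k :=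
  RingQuot.mkAlgHom k (W1Rel k) (ι k false)

/-!
Closure under addition, left multiplication and `[·, p]` is immediate, the last because the
entries of `Q(p)` commute with `p`. For density, `adj(Q) Q = det Q` reduces everything to
`1 ∈ A₁ f(p) + A₁ qᵐ` for the nonzero polynomial `f = det Q`. Since `[q, g(p)] = g'(p)`,
`q^(j+n) f(p) = ∑ᵢ C(j+n, i) f⁽ⁱ⁾(p) q^(j+n-i)` with `n = deg f`: the terms with `i > n` vanish,
those with `i < n` lie in `A₁ q^(j+1)`, and the term `i = n` is a scalar multiple of `qʲ` which is
nonzero in characteristic zero. Hence `qʲ ∈ A₁ f(p) + A₁ q^(j+1)` for every `j`, and descending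
from `j = m` to `j = 0` gives `1`.
-/

open Polynomial

theorem Polynomial.iterate_derivative_natDegree {R : Type*} [Semiring R] (f : R[X]) :
    derivative^[f.natDegree] f = C (f.natDegree.factorial • f.leadingCoeff) := by
  have h : (derivative^[f.natDegree] f).natDegree = 0 := by
    simpa using natDegree_iterate_derivative f f.natDegree
  rw [eq_C_of_natDegree_eq_zero h, coeff_iterate_derivative, zero_add, Nat.descFactorial_self,
    leadingCoeff]

theorem pow_mul_eq_sum_choose_smul_commutator {R A : Type*} [CommRing R] [Ring A] [Algebra R A]
    (a x : A) (n : ℕ) :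
    a ^ n * x = ∑ i ∈ Finset.range (n + 1),
      n.choose i • ((LinearMap.mulLeft R a - LinearMap.mulRight R a) ^ i) x * a ^ (n - i) := by
  set D := LinearMap.mulLeft R a - LinearMap.mulRight R a
  have hcomm : Commute D (LinearMap.mulRight R a) :=
    (LinearMap.commute_mulLeft_right a a).sub_left (Commute.refl _)
  have h := LinearMap.congr_fun (hcomm.add_pow n) x
  rw [sub_add_cancel, LinearMap.pow_mulLeft, LinearMap.mulLeft_apply] at h
  rw [h, LinearMap.sum_apply]
  refine Finset.sum_congr rfl fun i _ => ?_
  rw [(hcomm.pow_pow i (n - i)).eq, Module.End.mul_apply, Module.End.mul_apply,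
    Module.End.natCast_apply, map_nsmul, LinearMap.pow_mulRight, LinearMap.mulRight_apply]

theorem Ideal.one_mem_span_pair_pow_of_pow_mem {A : Type*} [Semiring A] {a x : A}
    (h : ∀ j, x ^ j ∈ Ideal.span {a, x ^ (j + 1)}) (m : ℕ) :
    (1 : A) ∈ Ideal.span {a, x ^ m} := by
  suffices ∀ d j, x ^ j ∈ Ideal.span {a, x ^ (j + d)} by simpa using this m 0
  intro d
  induction d with
  | zero => exact fun j => Ideal.subset_span (by simp)
  | succ d ih =>
    intro j
    refine Ideal.span_le.2 ?_ (ih j)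
    rintro y (rfl | rfl)
    · exact Ideal.subset_span (by simp)
    · exact h (j + d)

namespace Weyl1

variable {k : Type*} [Field k]

theorem qgen_mul_pgen : qgen k * pgen k = pgen k * qgen k + 1 := by
  simpa [pgen, qgen] using RingQuot.mkAlgHom_rel k (W1Rel.qp (k := k))

theorem qgen_mul_aeval (f : k[X]) :
    qgen k * aeval (pgen k) f = aeval (pgen k) f * qgen k + aeval (pgen k) (derivative f) := by
  induction f using Polynomial.induction_on with
  | C a => simp [Algebra.commutes]
  | add f g hf hg =>
    simp only [map_add, mul_add, add_mul, hf, hg]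
    abel
  | monomial n a ih =>
    rw [pow_succ, ← mul_assoc]
    set g := C a * X ^ n
    rw [derivative_mul, derivative_X, mul_one, map_add, map_mul _ g, map_mul _ (derivative g),
      aeval_X]
    set y := aeval (pgen k) g
    calc qgen k * (y * pgen k) = (qgen k * y) * pgen k := (mul_assoc _ _ _).symm
      _ = y * (qgen k * pgen k) + aeval (pgen k) (derivative g) * pgen k := by
        rw [ih, add_mul, mul_assoc]
      _ = _ := by
        rw [qgen_mul_pgen]
        simp only [mul_add, mul_assoc, mul_one]
        abel

theorem commutator_qgen_pow_apply_aeval (f : k[X]) (i : ℕ) :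
    ((LinearMap.mulLeft k (qgen k) - LinearMap.mulRight k (qgen k)) ^ i) (aeval (pgen k) f)
      = aeval (pgen k) (derivative^[i] f) := by
  induction i with
  | zero => rfl
  | succ i ih =>
    rw [pow_succ', Module.End.mul_apply, ih, Function.iterate_succ_apply', LinearMap.sub_apply,
      LinearMap.mulLeft_apply, LinearMap.mulRight_apply, qgen_mul_aeval, add_sub_cancel_left]

theorem qgen_pow_mem_span_aeval_qgen_pow_succ [CharZero k] {f : k[X]} (hf : f ≠ 0) (j : ℕ) :
    qgen k ^ j ∈ Ideal.span {aeval (pgen k) f, qgen k ^ (j + 1)} := by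
  set n := f.natDegree
  set I := Ideal.span {aeval (pgen k) f, qgen k ^ (j + 1)}
  set term : ℕ → Weyl1 k := fun i =>
    (j + n).choose i • aeval (pgen k) (derivative^[i] f) * qgen k ^ (j + n - i)
  have hsum : ∑ i ∈ Finset.range (j + n + 1), term i ∈ I := by
    have h := pow_mul_eq_sum_choose_smul_commutator (R := k) (qgen k) (aeval (pgen k) f) (j + n)
    simp only [commutator_qgen_pow_apply_aeval] at h
    rw [← h]
    exact I.mul_mem_left _ (Ideal.subset_span (by simp))
  have hrest : ∀ i ∈ (Finset.range (j + n + 1)).erase n, term i ∈ I := by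
    intro i hi
    rcases lt_or_gt_of_ne (Finset.ne_of_mem_erase hi) with hlt | hgt
    · have : j + n - i = (n - i - 1) + (j + 1) := by omega
      simp only [term]
      rw [this, pow_add, ← mul_assoc]
      exact I.mul_mem_left _ (Ideal.subset_span (by simp))
    · simp [term, iterate_derivative_eq_zero hgt]
  have hn : term n ∈ I := by
    rw [← Finset.add_sum_erase _ _ (by simp : n ∈ Finset.range (j + n + 1))] at hsum
    exact (I.add_mem_iff_left (I.sum_mem hrest)).1 hsum
  set c : k := (j + n).choose n * (n.factorial * f.leadingCoeff)
  have hc : c ≠ 0 := mul_ne_zero (Nat.cast_ne_zero.2 (Nat.choose_pos (by omega)).ne')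
    (mul_ne_zero (Nat.cast_ne_zero.2 n.factorial_ne_zero) (leadingCoeff_ne_zero.2 hf))
  have hder : derivative^[n] f = C (n.factorial • f.leadingCoeff) := iterate_derivative_natDegree f
  have hterm : term n = algebraMap k _ c * qgen k ^ j := by
    simp only [term, hder, aeval_C, Nat.add_sub_cancel, nsmul_eq_mul, map_mul, map_natCast,
      mul_assoc, c]
  rw [hterm] at hn
  simpa [← mul_assoc, ← map_mul, inv_mul_cancel₀ hc] using I.mul_mem_left (algebraMap k _ c⁻¹) hn

theorem exists_mul_aeval_add_mul_qgen_pow_eq_one [CharZero k] {f : k[X]} (hf : f ≠ 0) (m : ℕ) :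
    ∃ u z : Weyl1 k, u * aeval (pgen k) f + z * qgen k ^ m = 1 :=
  Submodule.mem_span_pair.1 <|
    Ideal.one_mem_span_pair_pow_of_pow_mem (qgen_pow_mem_span_aeval_qgen_pow_succ hf) m

end Weyl1

namespace Matrix

variable {n S R : Type*} [Fintype n] [DecidableEq n]

theorem map_adjugate_mul_map [CommRing S] [Ring R] (φ : S →+* R) (Q : Matrix n n S) :
    Q.adjugate.map φ * Q.map φ = scalar n (φ Q.det) := by
  rw [← Matrix.map_mul, adjugate_mul, smul_eq_diagonal_mul, mul_one, diagonal_map (map_zero φ)]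
  rfl

theorem eq_mul_map_add_mul_scalar [CommRing S] [Ring R] (φ : S →+* R) (Q : Matrix n n S)
    {t u z : R} (h : u * φ Q.det + z * t = 1) (Y : Matrix n n R) :
    Y = (Y * scalar n u * Q.adjugate.map φ) * Q.map φ + (Y * scalar n z) * scalar n t := by
  rw [mul_assoc _ (Q.adjugate.map φ), map_adjugate_mul_map, mul_assoc Y, mul_assoc Y, ← mul_add,
    ← map_mul, ← map_mul, ← map_add, h, map_one, mul_one]

theorem commute_scalar_map_aeval [CommSemiring S] [Semiring R] [Algebra S R] (a : R)
    (Q : Matrix n n S[X]) : Commute (scalar n a) (Q.map (aeval a)) :=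
  scalar_commute_iff.2 <| ext fun i j => by
    simpa using ((commute_X (Q i j)).map (aeval a)).eq

end Matrix

open Matrix in
theorem weyl_ideal_dense_general (k : Type*) [Field k] [CharZero k] (N : ℕ)
    (Q : Matrix (Fin N) (Fin N) (Polynomial k)) (hdet : Q.det ≠ 0) :
    (∀ x ∈ {y : Matrix (Fin N) (Fin N) (Weyl1 k) |
        ∃ X, y = X * Q.map (Polynomial.aeval (pgen k))},
      ∀ y ∈ {y : Matrix (Fin N) (Fin N) (Weyl1 k) |
        ∃ X, y = X * Q.map (Polynomial.aeval (pgen k))},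
      x + y ∈ {y : Matrix (Fin N) (Fin N) (Weyl1 k) |
        ∃ X, y = X * Q.map (Polynomial.aeval (pgen k))}) ∧
    (∀ r : Matrix (Fin N) (Fin N) (Weyl1 k),
      ∀ x ∈ {y : Matrix (Fin N) (Fin N) (Weyl1 k) |
        ∃ X, y = X * Q.map (Polynomial.aeval (pgen k))},
      r * x ∈ {y : Matrix (Fin N) (Fin N) (Weyl1 k) |
        ∃ X, y = X * Q.map (Polynomial.aeval (pgen k))}) ∧
    (∀ x ∈ {y : Matrix (Fin N) (Fin N) (Weyl1 k) |
        ∃ X, y = X * Q.map (Polynomial.aeval (pgen k))},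
      x * Matrix.scalar (Fin N) (pgen k) - Matrix.scalar (Fin N) (pgen k) * x ∈
        {y : Matrix (Fin N) (Fin N) (Weyl1 k) |
          ∃ X, y = X * Q.map (Polynomial.aeval (pgen k))}) ∧
    (∀ m : ℕ, 1 ≤ m → ∀ Y : Matrix (Fin N) (Fin N) (Weyl1 k),
      ∃ x ∈ {y : Matrix (Fin N) (Fin N) (Weyl1 k) |
        ∃ X, y = X * Q.map (Polynomial.aeval (pgen k))},
      ∃ Z : Matrix (Fin N) (Fin N) (Weyl1 k),
        Y = x + Z * Matrix.scalar (Fin N) (qgen k ^ m)) := by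
  refine ⟨?_, ?_, ?_, ?_⟩
  · rintro _ ⟨X, rfl⟩ _ ⟨X', rfl⟩
    exact ⟨X + X', (add_mul _ _ _).symm⟩
  · rintro r _ ⟨X, rfl⟩
    exact ⟨r * X, (mul_assoc _ _ _).symm⟩
  · rintro _ ⟨X, rfl⟩
    refine ⟨X * scalar (Fin N) (pgen k) - scalar (Fin N) (pgen k) * X, ?_⟩
    rw [sub_mul, mul_assoc X, ← (commute_scalar_map_aeval (pgen k) Q).eq, mul_assoc, mul_assoc]
  · intro m _ Y
    obtain ⟨u, z, h⟩ := Weyl1.exists_mul_aeval_add_mul_qgen_pow_eq_one hdet m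
    have hY := eq_mul_map_add_mul_scalar (aeval (pgen k)).toRingHom Q h Y
    exact ⟨_, ⟨_, rfl⟩, _, hY⟩

/-- Let `Q` be an `N×N` matrix over `k[p]` with `det Q ≠ 0`, and let
`A = M_N(A₁)·Q(p) ⊆ M_N(A₁)`.  Then `A` is a left ideal of `M_N(A₁)`, closed under
the derivation `∂ = [·,p]`, and `A` is dense in the `q`-adic topology:
`A + M_N(A₁)·qᵐ = M_N(A₁)` for every `m ≥ 1`. -/
theorem weyl_ideal_dense (k : Type*) [Field k] [IsAlgClosed k] [CharZero k] (N : ℕ)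
    (Q : Matrix (Fin N) (Fin N) (Polynomial k)) (hdet : Q.det ≠ 0) :
    (∀ x ∈ {y : Matrix (Fin N) (Fin N) (Weyl1 k) |
        ∃ X, y = X * Q.map (Polynomial.aeval (pgen k))},
      ∀ y ∈ {y : Matrix (Fin N) (Fin N) (Weyl1 k) |
        ∃ X, y = X * Q.map (Polynomial.aeval (pgen k))},
      x + y ∈ {y : Matrix (Fin N) (Fin N) (Weyl1 k) |
        ∃ X, y = X * Q.map (Polynomial.aeval (pgen k))}) ∧
    (∀ r : Matrix (Fin N) (Fin N) (Weyl1 k),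
      ∀ x ∈ {y : Matrix (Fin N) (Fin N) (Weyl1 k) |
        ∃ X, y = X * Q.map (Polynomial.aeval (pgen k))},
      r * x ∈ {y : Matrix (Fin N) (Fin N) (Weyl1 k) |
        ∃ X, y = X * Q.map (Polynomial.aeval (pgen k))}) ∧
    (∀ x ∈ {y : Matrix (Fin N) (Fin N) (Weyl1 k) |
        ∃ X, y = X * Q.map (Polynomial.aeval (pgen k))},
      x * Matrix.scalar (Fin N) (pgen k) - Matrix.scalar (Fin N) (pgen k) * x ∈
        {y : Matrix (Fin N) (Fin N) (Weyl1 k) |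
          ∃ X, y = X * Q.map (Polynomial.aeval (pgen k))}) ∧
    (∀ m : ℕ, 1 ≤ m → ∀ Y : Matrix (Fin N) (Fin N) (Weyl1 k),
      ∃ x ∈ {y : Matrix (Fin N) (Fin N) (Weyl1 k) |
        ∃ X, y = X * Q.map (Polynomial.aeval (pgen k))},
      ∃ Z : Matrix (Fin N) (Fin N) (Weyl1 k),
        Y = x + Z * Matrix.scalar (Fin N) (qgen k ^ m)) :=
  weyl_ideal_dense_general k N Q hdet
end
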